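/- arXiv:1612.00142 — 2 statements merged into one kernel-verified Lean document; each statement's English description precedes it below -/
import Mathlib

section
/- Let f₁(x) := x₂, f₂(x) := x₁ + x₂², f₃(x) := −x₁ − x₁|x₁| + x₂² for x = (x₁, x₂) ∈ ℝ², let x⁰ := (0,0), and let Mⁱ := {x ∈ ℝ² : f_i(x) ≤ 0} for i = 1, 2, 3. Then T(M¹; x⁰) = {(u₁, u₂) : u₂ ≤ 0}, T(M²; x⁰) = {(u₁, u₂) : u₁ ≤ 0}, T(M³; x⁰) = {(u₁, u₂) : u₁ ≥ 0}, and consequently ∩_{i=1}^3 T(Mⁱ; x⁰) = {(u₁, u₂) ∈ ℝ² : u₁ = 0, u₂ ≤ 0}. -/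
open Filter Topology Set

noncomputable section

/-- The (first-order) tangent cone `T(C; x⁰)` in `ℝ²`. -/
def tcone (C : Set (ℝ × ℝ)) (x0 : ℝ × ℝ) : Set (ℝ × ℝ) :=
  {d | ∃ t : ℕ → ℝ, ∃ dk : ℕ → ℝ × ℝ,
    (∀ k, 0 < t k) ∧ Tendsto t atTop (𝓝 0) ∧ Tendsto dk atTop (𝓝 d) ∧
    ∀ k, x0 + t k • dk k ∈ C}

/-- `f₁(x) = x₂`. -/
def f₁ (x : ℝ × ℝ) : ℝ := x.2

/-- `f₂(x) = x₁ + x₂²`. -/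
def f₂ (x : ℝ × ℝ) : ℝ := x.1 + x.2 ^ 2

/-- `f₃(x) = −x₁ − x₁|x₁| + x₂²`. -/
def f₃ (x : ℝ × ℝ) : ℝ := -x.1 - x.1 * |x.1| + x.2 ^ 2

/-- `M¹ = {x : f₁(x) ≤ 0}`. -/
def M₁ : Set (ℝ × ℝ) := {x | f₁ x ≤ 0}

/-- `M² = {x : f₂(x) ≤ 0}`. -/
def M₂ : Set (ℝ × ℝ) := {x | f₂ x ≤ 0}

/-- `M³ = {x : f₃(x) ≤ 0}`. -/
def M₃ : Set (ℝ × ℝ) := {x | f₃ x ≤ 0}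

/-! Each `Mⁱ` is a sublevel set `{f ≤ 0}` with `f (t • d) = t * φ t d` for `t > 0` and a jointly
continuous `φ`. Passing to the limit in `φ (t k) (dk k) ≤ 0` gives `T(Mⁱ; x⁰) ⊆ {d | φ 0 d ≤ 0}`;
conversely each such `d` is the limit, as `t ↓ 0`, of directions along which `φ t` stays
nonpositive: `d` itself for `M¹`, and `d ∓ (t d₂², 0)` for `M²` and `M³`. -/

theorem le_zero_of_mem_tcone {C : Set (ℝ × ℝ)} {x0 d : ℝ × ℝ} {φ : ℝ → ℝ × ℝ → ℝ}
    (hφ : Continuous (Function.uncurry φ))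
    (hC : ∀ t > 0, ∀ d, x0 + t • d ∈ C → φ t d ≤ 0) (hd : d ∈ tcone C x0) :
    φ 0 d ≤ 0 := by
  obtain ⟨t, dk, ht, ht0, hdk, hmem⟩ := hd
  have hlim : Tendsto (fun k ↦ φ (t k) (dk k)) atTop (𝓝 (φ 0 d)) :=
    (hφ.tendsto (0, d)).comp (ht0.prodMk_nhds hdk)
  exact le_of_tendsto' hlim fun k ↦ hC _ (ht k) _ (hmem k)

theorem mem_tcone_of_tendsto {C : Set (ℝ × ℝ)} {x0 d : ℝ × ℝ} (δ : ℝ → ℝ × ℝ)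
    (hδ : Tendsto δ (𝓝[>] 0) (𝓝 d)) (hmem : ∀ t > 0, x0 + t • δ t ∈ C) :
    d ∈ tcone C x0 := by
  have hpos : ∀ k : ℕ, (0 : ℝ) < 1 / ((k : ℝ) + 1) := fun k ↦ by positivity
  have hlim : Tendsto (fun k : ℕ ↦ 1 / ((k : ℝ) + 1)) atTop (𝓝[>] 0) :=
    tendsto_nhdsWithin_iff.2
      ⟨tendsto_one_div_add_atTop_nhds_zero_nat, Eventually.of_forall hpos⟩
  exact ⟨_, _, hpos, tendsto_one_div_add_atTop_nhds_zero_nat, hδ.comp hlim,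
    fun k ↦ hmem _ (hpos k)⟩

theorem tcone_sublevel_eq {f : ℝ × ℝ → ℝ} {x0 : ℝ × ℝ} (φ : ℝ → ℝ × ℝ → ℝ)
    (hφ : Continuous (Function.uncurry φ))
    (hf : ∀ t > 0, ∀ d, f (x0 + t • d) = t * φ t d)
    (hcurve : ∀ d, φ 0 d ≤ 0 →
      ∃ δ : ℝ → ℝ × ℝ, Tendsto δ (𝓝[>] 0) (𝓝 d) ∧ ∀ t > 0, φ t (δ t) ≤ 0) :
    tcone {x | f x ≤ 0} x0 = {d | φ 0 d ≤ 0} := by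
  have hmem_iff : ∀ t > 0, ∀ d, x0 + t • d ∈ {x | f x ≤ 0} ↔ φ t d ≤ 0 := fun t ht d ↦ by
    rw [mem_ofPred_eq, hf t ht d]
    exact ⟨fun h ↦ nonpos_of_mul_nonpos_right h ht, mul_nonpos_of_nonneg_of_nonpos ht.le⟩
  ext d
  refine ⟨le_zero_of_mem_tcone hφ fun t ht d ↦ (hmem_iff t ht d).1, fun hd ↦ ?_⟩
  obtain ⟨δ, hδ, hδφ⟩ := hcurve d hd
  exact mem_tcone_of_tendsto δ hδ fun t ht ↦ (hmem_iff t ht _).2 (hδφ t ht)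

theorem tcone_M₁ : tcone M₁ (0, 0) = {u : ℝ × ℝ | u.2 ≤ 0} :=
  tcone_sublevel_eq (fun _ d ↦ d.2) (by fun_prop)
    (fun t _ d ↦ by simp [f₁])
    (fun d hd ↦ ⟨fun _ ↦ d, tendsto_const_nhds, fun _ _ ↦ hd⟩)

theorem tcone_M₂ : tcone M₂ (0, 0) = {u : ℝ × ℝ | u.1 ≤ 0} := by
  refine (tcone_sublevel_eq (fun t d ↦ d.1 + t * d.2 ^ 2) (by fun_prop) (fun t _ d ↦ ?_)
    (fun d hd ↦ ?_)).trans (by ext; simp)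
  · simp only [f₂, Prod.fst_add, Prod.snd_add, Prod.smul_fst, Prod.smul_snd, smul_eq_mul,
      zero_add]
    ring
  · refine ⟨fun t ↦ (d.1 - t * d.2 ^ 2, d.2), ?_, fun t _ ↦ by simpa using hd⟩
    exact ((by fun_prop : Continuous _).tendsto' 0 d (by simp)).mono_left nhdsWithin_le_nhds

theorem tcone_M₃ : tcone M₃ (0, 0) = {u : ℝ × ℝ | 0 ≤ u.1} := by
  refine (tcone_sublevel_eq (fun t d ↦ -d.1 - t * (d.1 * |d.1|) + t * d.2 ^ 2) (by fun_prop)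
    (fun t ht d ↦ ?_) (fun d hd ↦ ?_)).trans (by ext; simp)
  · simp only [f₃, Prod.fst_add, Prod.snd_add, Prod.smul_fst, Prod.smul_snd, smul_eq_mul,
      zero_add, abs_mul, abs_of_pos ht]
    ring
  · replace hd : 0 ≤ d.1 := by simpa using hd
    refine ⟨fun t ↦ (d.1 + t * d.2 ^ 2, d.2), ?_, fun t ht ↦ ?_⟩
    · exact ((by fun_prop : Continuous _).tendsto' 0 d (by simp)).mono_left nhdsWithin_le_nhds
    · -- with `a = d.1 + t * d.2 ^ 2 ≥ 0`, the value is `-d.1 - t * a ^ 2`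
      have ha : 0 ≤ d.1 + t * d.2 ^ 2 := by positivity
      simp only [abs_of_nonneg ha]
      nlinarith [mul_nonneg ht.le (mul_nonneg ha ha)]

/-- Computation of the tangent cones in Example 3.1. -/
theorem stmt_10 :
    tcone M₁ (0, 0) = {u : ℝ × ℝ | u.2 ≤ 0} ∧
    tcone M₂ (0, 0) = {u : ℝ × ℝ | u.1 ≤ 0} ∧
    tcone M₃ (0, 0) = {u : ℝ × ℝ | 0 ≤ u.1} ∧
    tcone M₁ (0, 0) ∩ tcone M₂ (0, 0) ∩ tcone M₃ (0, 0)
      = {u : ℝ × ℝ | u.1 = 0 ∧ u.2 ≤ 0} := by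
  refine ⟨tcone_M₁, tcone_M₂, tcone_M₃, ?_⟩
  rw [tcone_M₁, tcone_M₂, tcone_M₃]
  ext u
  simp only [mem_inter_iff, mem_ofPred_eq, le_antisymm_iff (a := u.1)]
  tauto
end
end

section
/- Let f₁(x) := x₂, f₂(x) := x₁ + x₂², f₃(x) := −x₁ − x₁|x₁| + x₂² for x = (x₁, x₂) ∈ ℝ², let x⁰ := (0,0), Mⁱ := {x ∈ ℝ² : f_i(x) ≤ 0} for i = 1, 2, 3, and Qⁱ := ∩_{k ≠ i} Mᵏ (so Q¹ = M² ∩ M³, Q² = M¹ ∩ M³, Q³ = M¹ ∩ M²). Then Q¹ = {(0,0)}, T(Q¹; x⁰) = {(0,0)}, hence ∩_{i=1}^3 T(Qⁱ; x⁰) = {(0,0)}, and this is a proper subset of ∩_{i=1}^3 T(Mⁱ; x⁰) = {(u₁, u₂) ∈ ℝ² : u₁ = 0, u₂ ≤ 0}. -/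
open Filter Topology Set

noncomputable section

/-
Q¹ = M² ∩ M³ is the origin: f₂ ≤ 0 forces x₁ ≤ -x₂² ≤ 0, and then f₃ = -x₁ + x₁² + x₂² ≤ 0 forces
x = 0. Hence T(Q¹; 0) = {0}, and so is the intersection of the three cones T(Qⁱ; 0). On the other
hand, each T(Mⁱ; 0) is cut out by the linear part of fᵢ (u₂ ≤ 0, u₁ ≤ 0, u₁ ≥ 0), since the
quadratic term x₂² can be absorbed by bending the ray through u by a second-order correction in x₁;
so ∩ T(Mⁱ; 0) is the ray {u₁ = 0, u₂ ≤ 0}.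
-/

lemma zero_mem_tcone {C : Set (ℝ × ℝ)} {x0 : ℝ × ℝ} (h : x0 ∈ C) : (0 : ℝ × ℝ) ∈ tcone C x0 :=
  ⟨fun k => 1 / ((k : ℝ) + 1), fun _ => 0, fun _ => by positivity,
    tendsto_one_div_add_atTop_nhds_zero_nat, tendsto_const_nhds, fun _ => by simpa using h⟩

lemma tcone_singleton (x0 : ℝ × ℝ) : tcone {x0} x0 = {0} := by
  refine Subset.antisymm ?_ fun d hd => hd ▸ zero_mem_tcone rfl
  rintro d ⟨t, dk, ht, -, hdk, hmem⟩
  have hzero : dk = fun _ => 0 := funext fun k => by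
    simpa [(ht k).ne'] using hmem k
  exact tendsto_nhds_unique hdk (hzero ▸ tendsto_const_nhds)

lemma mem_tcone_of_add_smul_mem {C : Set (ℝ × ℝ)} {x0 d v : ℝ × ℝ}
    (h : ∀ t : ℝ, 0 < t → x0 + t • (d + t • v) ∈ C) : d ∈ tcone C x0 := by
  have ht : Tendsto (fun k : ℕ => 1 / ((k : ℝ) + 1)) atTop (𝓝 0) :=
    tendsto_one_div_add_atTop_nhds_zero_nat
  refine ⟨_, _, fun _ => by positivity, ht, ?_, fun k => h _ (by positivity)⟩
  simpa using tendsto_const_nhds.add (ht.smul_const v)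

lemma tcone_subset_of_isClosed {C S : Set (ℝ × ℝ)} {x0 : ℝ × ℝ} (hS : IsClosed S)
    (h : ∀ t : ℝ, 0 < t → ∀ e, x0 + t • e ∈ C → e ∈ S) : tcone C x0 ⊆ S := by
  rintro d ⟨t, dk, ht, -, hdk, hmem⟩
  exact hS.mem_of_tendsto hdk (Eventually.of_forall fun k => h _ (ht k) _ (hmem k))

lemma M₂_inter_M₃ : M₂ ∩ M₃ = ({(0, 0)} : Set (ℝ × ℝ)) := by
  ext ⟨a, b⟩
  simp only [M₂, M₃, f₂, f₃, mem_inter_iff, mem_ofPred_eq, mem_singleton_iff, Prod.mk.injEq]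
  constructor
  · rintro ⟨h₂, h₃⟩
    have ha : a ≤ 0 := by nlinarith [sq_nonneg b]
    rw [abs_of_nonpos ha] at h₃
    constructor <;> nlinarith [sq_nonneg a, sq_nonneg b]
  · rintro ⟨rfl, rfl⟩
    norm_num

lemma tcone_M₂_inter_M₃ : tcone (M₂ ∩ M₃) (0, 0) = ({(0, 0)} : Set (ℝ × ℝ)) := by
  rw [M₂_inter_M₃, tcone_singleton, Prod.mk_zero_zero]

lemma snd_nonpos_of_smul_mem_M₁ {t : ℝ} (ht : 0 < t) {e : ℝ × ℝ} (h : t • e ∈ M₁) :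
    e.2 ≤ 0 := by
  simp only [M₁, f₁, mem_ofPred_eq, Prod.smul_snd, smul_eq_mul] at h
  exact nonpos_of_mul_nonpos_right h ht

lemma fst_nonpos_of_smul_mem_M₂ {t : ℝ} (ht : 0 < t) {e : ℝ × ℝ} (h : t • e ∈ M₂) :
    e.1 ≤ 0 := by
  simp only [M₂, f₂, mem_ofPred_eq, Prod.smul_fst, Prod.smul_snd, smul_eq_mul] at h
  nlinarith [sq_nonneg (t * e.2)]

lemma fst_nonneg_of_smul_mem_M₃ {t : ℝ} (ht : 0 < t) {e : ℝ × ℝ} (h : t • e ∈ M₃) :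
    0 ≤ e.1 := by
  simp only [M₃, f₃, mem_ofPred_eq, Prod.smul_fst, Prod.smul_snd, smul_eq_mul] at h
  by_contra! he
  have hneg : t * e.1 < 0 := mul_neg_of_pos_of_neg ht he
  rw [abs_of_neg hneg] at h
  nlinarith [sq_nonneg (t * e.2)]

lemma tcone_M₁_inter_tcone_M₂_inter_tcone_M₃ :
    tcone M₁ (0, 0) ∩ tcone M₂ (0, 0) ∩ tcone M₃ (0, 0)
      = {u : ℝ × ℝ | u.1 = 0 ∧ u.2 ≤ 0} := by
  simp only [Prod.mk_zero_zero]
  apply Subset.antisymm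
  · rintro u ⟨⟨h₁, h₂⟩, h₃⟩
    have hu₂ := tcone_subset_of_isClosed (isClosed_le continuous_snd continuous_const)
      (fun t ht e he => snd_nonpos_of_smul_mem_M₁ ht (by simpa using he)) h₁
    have hu₁_nonpos := tcone_subset_of_isClosed (isClosed_le continuous_fst continuous_const)
      (fun t ht e he => fst_nonpos_of_smul_mem_M₂ ht (by simpa using he)) h₂
    have hu₁_nonneg := tcone_subset_of_isClosed (isClosed_le continuous_const continuous_fst)
      (fun t ht e he => fst_nonneg_of_smul_mem_M₃ ht (by simpa using he)) h₃
    exact ⟨le_antisymm hu₁_nonpos hu₁_nonneg, hu₂⟩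
  · rintro ⟨a, b⟩ ⟨rfl, hb⟩
    -- The corrections `∓ t² b²` in the first coordinate cancel the `(t b)²` in `f₂` and `f₃`.
    refine ⟨⟨mem_tcone_of_add_smul_mem (v := 0) fun t ht => ?_,
      mem_tcone_of_add_smul_mem (v := (-b ^ 2, 0)) fun t ht => ?_⟩,
      mem_tcone_of_add_smul_mem (v := (b ^ 2, 0)) fun t ht => ?_⟩
    · simpa [M₁, f₁] using mul_nonpos_of_nonneg_of_nonpos ht.le hb
    · simpa [M₂, f₂] using le_of_eq (by ring)
    · simp [M₃, f₃, abs_of_pos ht]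
      nlinarith [sq_nonneg (t * (t * b ^ 2))]

/-- Example 3.1: the intersection of the tangent cones of the `Qⁱ` is strictly
smaller than the intersection of the tangent cones of the `Mⁱ`. -/
theorem stmt_11 :
    M₂ ∩ M₃ = ({(0, 0)} : Set (ℝ × ℝ)) ∧
    tcone (M₂ ∩ M₃) (0, 0) = ({(0, 0)} : Set (ℝ × ℝ)) ∧
    tcone (M₂ ∩ M₃) (0, 0) ∩ tcone (M₁ ∩ M₃) (0, 0) ∩ tcone (M₁ ∩ M₂) (0, 0)
      = ({(0, 0)} : Set (ℝ × ℝ)) ∧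
    tcone (M₂ ∩ M₃) (0, 0) ∩ tcone (M₁ ∩ M₃) (0, 0) ∩ tcone (M₁ ∩ M₂) (0, 0)
      ⊂ tcone M₁ (0, 0) ∩ tcone M₂ (0, 0) ∩ tcone M₃ (0, 0) ∧
    tcone M₁ (0, 0) ∩ tcone M₂ (0, 0) ∩ tcone M₃ (0, 0)
      = {u : ℝ × ℝ | u.1 = 0 ∧ u.2 ≤ 0} := by
  have h₁ : ((0 : ℝ), (0 : ℝ)) ∈ M₁ := by simp [M₁, f₁]
  have h₂ : ((0 : ℝ), (0 : ℝ)) ∈ M₂ := by simp [M₂, f₂]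
  have h₃ : ((0 : ℝ), (0 : ℝ)) ∈ M₃ := by simp [M₃, f₃]
  have hQ : tcone (M₂ ∩ M₃) (0, 0) ∩ tcone (M₁ ∩ M₃) (0, 0) ∩ tcone (M₁ ∩ M₂) (0, 0)
      = ({(0, 0)} : Set (ℝ × ℝ)) := by
    refine Subset.antisymm (fun d hd => tcone_M₂_inter_M₃ ▸ hd.1.1) ?_
    rintro _ rfl
    exact ⟨⟨zero_mem_tcone ⟨h₂, h₃⟩, zero_mem_tcone ⟨h₁, h₃⟩⟩, zero_mem_tcone ⟨h₁, h₂⟩⟩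
  refine ⟨M₂_inter_M₃, tcone_M₂_inter_M₃, hQ, ?_, tcone_M₁_inter_tcone_M₂_inter_tcone_M₃⟩
  rw [hQ, tcone_M₁_inter_tcone_M₂_inter_tcone_M₃]
  refine ⟨by simp, fun h => ?_⟩
  simpa using h (show ((0 : ℝ), (-1 : ℝ)) ∈ _ from ⟨rfl, by norm_num⟩)
end
end
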